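/- Let G be a biconnected finite simple graph with distinguished adjacent vertices s and t. Then there exists an ordering v_0 = s, v_1, ..., v_{n-1} = t of the vertices such that every vertex other than s and t has at least one neighbor with a smaller index and at least one neighbor with a larger index in the ordering (an st-ordering). -/

import Mathlib

open List

section Aux

variable {V : Type*}

/-- Split a list at the first element satisfying membership in `S`. -/
private lemma aux_first_in_set (S : Set V) :
    ∀ (M : List V), (∃ m ∈ M, m ∈ S) →
      ∃ B y C, M = B ++ y :: C ∧ y ∈ S ∧ ∀ b ∈ B, b ∉ S := by
  intro M
  induction M with
  | nil => rintro ⟨m, hm, -⟩; cases hm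
  | cons a M ih =>
    intro h
    by_cases ha : a ∈ S
    · exact ⟨[], a, M, rfl, ha, by simp⟩
    · obtain ⟨m, hm, hmS⟩ := h
      rcases List.mem_cons.1 hm with rfl | hm
      · exact absurd hmS ha
      · obtain ⟨B, y, C, hM, hy, hB⟩ := ih ⟨m, hm, hmS⟩
        refine ⟨a :: B, y, C, by simp [hM], hy, ?_⟩
        intro b hb
        rcases List.mem_cons.1 hb with rfl | hb
        · exact ha
        · exact hB b hb

/-- Two distinct members of a list appear in one of the two orders. -/
private lemma aux_mem_mem_split {x y : V} :
    ∀ (L : List V), x ∈ L → y ∈ L → x ≠ y →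
      (∃ P Q R, L = P ++ x :: (Q ++ y :: R)) ∨
      (∃ P Q R, L = P ++ y :: (Q ++ x :: R)) := by
  intro L
  induction L with
  | nil => intro hx; cases hx
  | cons a L ih =>
    intro hx hy hxy
    rcases List.mem_cons.1 hx with rfl | hx1
    · left
      have hy' : y ∈ L := by
        rcases List.mem_cons.1 hy with rfl | h
        · exact absurd rfl hxy
        · exact h
      obtain ⟨Q, R, rfl⟩ := List.append_of_mem hy'
      exact ⟨[], Q, R, rfl⟩
    · rcases List.mem_cons.1 hy with rfl | hy'
      · right
        obtain ⟨Q, R, hL'⟩ := List.append_of_mem hx1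
        exact ⟨[], Q, R, by simp [hL']⟩
      · rcases ih hx1 hy' hxy with ⟨P, Q, R, rfl⟩ | ⟨P, Q, R, rfl⟩
        · exact Or.inl ⟨a :: P, Q, R, rfl⟩
        · exact Or.inr ⟨a :: P, Q, R, rfl⟩

/-- In a duplicate-free list, a pair sublist determines the order of indices. -/
private lemma aux_sublist_indexOf [DecidableEq V] {u v : V} :
    ∀ {L : List V}, L.Nodup → [u, v] <+ L → L.idxOf u < L.idxOf v := by
  intro L
  induction L with
  | nil => intro _ h; cases h
  | cons a L ih =>
    intro hnd h
    have haL : a ∉ L := (List.nodup_cons.1 hnd).1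
    cases h with
    | cons _ h =>
      have hu : u ∈ L := h.subset (by simp)
      have hv : v ∈ L := h.subset (by simp)
      have hau : a ≠ u := fun e => haL (e ▸ hu)
      have hav : a ≠ v := fun e => haL (e ▸ hv)
      rw [List.idxOf_cons_ne _ hau, List.idxOf_cons_ne _ hav]
      exact Nat.succ_lt_succ (ih (List.nodup_cons.1 hnd).2 h)
    | cons_cons _ h =>
      have hv : v ∈ L := h.subset (by simp)
      have huv : u ≠ v := fun e => haL (by rw [e]; exact hv)
      rw [List.idxOf_cons_self, List.idxOf_cons_ne _ huv]
      exact Nat.succ_pos _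

private lemma aux_sub_right {l l₂ : List V} (l₁ : List V) (h : l <+ l₂) :
    l <+ l₁ ++ l₂ :=
  h.trans (List.sublist_append_right l₁ l₂)

/-- The `st`-ordering invariant for a partial list of vertices. -/
private def GoodList (G : SimpleGraph V) (s t : V) (L : List V) : Prop :=
  L.Nodup ∧ L.head? = some s ∧ L.getLast? = some t ∧
    ∀ v ∈ L, v ≠ s → v ≠ t →
      (∃ u, G.Adj v u ∧ [u, v] <+ L) ∧ (∃ u, G.Adj v u ∧ [v, u] <+ L)

/-- Inserting an "ear" `B` just after `x`, whose other endpoint `y` lies later,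
preserves the invariant. -/
private lemma aux_good_insert {G : SimpleGraph V} {s t x y : V} {P Q R B : List V}
    (hg : GoodList G s t (P ++ x :: (Q ++ y :: R)))
    (hBne : B ≠ []) (hBnd : B.Nodup)
    (hdisj : ∀ b ∈ B, b ∉ P ++ x :: (Q ++ y :: R))
    (hchain : List.Chain' G.Adj (x :: (B ++ [y]))) :
    GoodList G s t (P ++ x :: (B ++ (Q ++ y :: R))) := by
  obtain ⟨hnd, hhead, hlast, hinv⟩ := hg
  set M : List V := Q ++ y :: R with hM
  have hLL' : (P ++ x :: M) <+ (P ++ x :: (B ++ M)) := by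
    refine (List.append_sublist_append_left P).2 ?_
    exact (List.sublist_append_right B M).cons₂ x
  refine ⟨?_, ?_, ?_, ?_⟩
  · -- Nodup
    have hperm : (P ++ x :: (B ++ M)).Perm ((P ++ x :: M) ++ B) := by
      have h1 : ((P ++ x :: M) ++ B) = P ++ x :: (M ++ B) := by
        simp [List.append_assoc]
      rw [h1]
      exact ((List.perm_append_comm).cons x).append_left P
    refine hperm.nodup_iff.2 (List.nodup_append.2 ⟨hnd, hBnd, ?_⟩)
    intro a haL b haB hab
    exact hdisj b haB (hab ▸ haL)
  · -- head?
    cases P with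
    | nil =>
      simp only [List.nil_append] at hhead ⊢
      simpa using hhead
    | cons p P => simpa using hhead
  · -- getLast?
    have h1 : P ++ x :: (Q ++ y :: R) = (P ++ x :: Q) ++ y :: R := by
      simp [List.append_assoc]
    have h2 : P ++ x :: (B ++ (Q ++ y :: R)) = (P ++ x :: (B ++ Q)) ++ y :: R := by
      simp [List.append_assoc]
    rw [h2, List.getLast?_append_cons]
    rw [h1, List.getLast?_append_cons] at hlast
    exact hlast
  · -- invariant
    intro v hv hvs hvt
    have hvmem : v ∈ P ++ x :: M ∨ v ∈ B := by
      simp only [List.mem_append, List.mem_cons] at hv ⊢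
      tauto
    rcases hvmem with hv' | hvB
    · obtain ⟨⟨u₁, ha₁, hs₁⟩, ⟨u₂, ha₂, hs₂⟩⟩ := hinv v hv' hvs hvt
      exact ⟨⟨u₁, ha₁, hs₁.trans hLL'⟩, ⟨u₂, ha₂, hs₂.trans hLL'⟩⟩
    · obtain ⟨B₁, B₂, rfl⟩ := List.append_of_mem hvB
      constructor
      · -- earlier neighbour
        have hC : x :: ((B₁ ++ v :: B₂) ++ [y]) = (x :: B₁) ++ (v :: (B₂ ++ [y])) := by
          simp
        rw [hC] at hchain
        obtain ⟨-, -, hrel⟩ := List.isChain_append.1 hchain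
        obtain ⟨u, hu⟩ : ∃ u, (x :: B₁).getLast? = some u :=
          ⟨_, List.getLast?_eq_getLast (List.cons_ne_nil _ _)⟩
        have hadj : G.Adj u v := hrel u hu v rfl
        have humem : u ∈ x :: B₁ := List.mem_of_mem_getLast? hu
        refine ⟨u, hadj.symm, ?_⟩
        have hsub : [u, v] <+ (x :: B₁) ++ (v :: (B₂ ++ M)) :=
          List.Sublist.append (List.singleton_sublist.2 humem)
            (List.singleton_sublist.2 (List.mem_cons_self (a := v)))
        have heq : (x :: B₁) ++ (v :: (B₂ ++ M)) = x :: ((B₁ ++ v :: B₂) ++ M) := by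
          simp
        rw [heq] at hsub
        exact aux_sub_right P hsub
      · -- later neighbour
        have hC : x :: ((B₁ ++ v :: B₂) ++ [y]) = ((x :: B₁) ++ [v]) ++ (B₂ ++ [y]) := by
          simp
        rw [hC] at hchain
        obtain ⟨-, -, hrel⟩ := List.isChain_append.1 hchain
        obtain ⟨u, hu⟩ : ∃ u, (B₂ ++ [y]).head? = some u := by
          cases h : (B₂ ++ [y]).head? with
          | none => simp [List.head?_eq_none_iff] at h
          | some u => exact ⟨u, rfl⟩
        have hlastv : ((x :: B₁) ++ [v]).getLast? = some v := by
          rw [List.getLast?_append_cons]; rfl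
        have hadj : G.Adj v u := hrel v hlastv u hu
        have humem : u ∈ B₂ ++ [y] := List.mem_of_mem_head? hu
        have humem' : u ∈ B₂ ++ M := by
          rcases List.mem_append.1 humem with h | h
          · exact List.mem_append.2 (Or.inl h)
          · simp only [List.mem_singleton] at h
        -- handle u = y : y ∈ M
            subst h
            exact List.mem_append.2 (Or.inr (by simp [hM]))
        refine ⟨u, hadj, ?_⟩
        have hsub : [v, u] <+ (v :: (B₂ ++ M)) :=
          (List.singleton_sublist.2 humem').cons₂ v
        have hsub2 : [v, u] <+ (x :: B₁) ++ (v :: (B₂ ++ M)) :=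
          aux_sub_right _ hsub
        have heq : (x :: B₁) ++ (v :: (B₂ ++ M)) = x :: ((B₁ ++ v :: B₂) ++ M) := by
          simp
        rw [heq] at hsub2
        exact aux_sub_right P hsub2

/-- Growth step: a good partial list which does not contain all vertices can be
extended using an ear. -/
private lemma aux_good_grow {G : SimpleGraph V} (hconn : G.Connected)
    (h2 : ∀ v : V, (G.induce ({v}ᶜ : Set V)).Connected)
    {s t : V} (hst : G.Adj s t) {L : List V} (hg : GoodList G s t L)
    {w₀ : V} (hw₀ : w₀ ∉ L) :
    ∃ L', GoodList G s t L' ∧ L.length < L'.length := by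
  classical
  obtain ⟨hnd, hhead, hlast, hinv⟩ := hg
  have hsL : s ∈ L := List.mem_of_mem_head? hhead
  have htL : t ∈ L := List.mem_of_mem_getLast? hlast
  -- find a boundary edge
  obtain ⟨w⟩ := hconn.preconnected s w₀
  obtain ⟨d, -, hdfst, hdsnd⟩ := w.exists_boundary_dart {v | v ∈ L} hsL hw₀
  set x : V := d.fst with hxdef
  set u : V := d.snd with hudef
  have hxL : x ∈ L := hdfst
  have huL : u ∉ L := hdsnd
  have hxu : G.Adj x u := d.adj
  -- a target vertex z ∈ L, z ≠ x
  obtain ⟨z, hzL, hzx⟩ : ∃ z, z ∈ L ∧ z ≠ x := by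
    by_cases hxs : x = s
    · exact ⟨t, htL, fun e => hst.ne' (e.trans hxs)⟩
    · exact ⟨s, hsL, fun e => hxs e.symm⟩
  have hux : u ≠ x := fun e => huL (e ▸ hxL)
  have hu' : u ∈ ({x}ᶜ : Set V) := by simpa using hux
  have hz' : z ∈ ({x}ᶜ : Set V) := by simpa using hzx
  -- a path avoiding x from u to z
  obtain ⟨p⟩ := (h2 x).preconnected ⟨u, hu'⟩ ⟨z, hz'⟩
  set q := p.toPath.1 with hq
  set M : List V := q.support.map Subtype.val with hMdef
  have hMnd : M.Nodup := p.toPath.2.support_nodup.map Subtype.val_injective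
  have hMchain : List.Chain' G.Adj M := by
    rw [hMdef]
    exact (List.isChain_map _).2 ((q.isChain_adj_support).imp (fun a b h => by
      simpa using h))
  have hMhead : M = u :: (q.support.tail.map Subtype.val) := by
    rw [hMdef, q.support_eq_cons]; rfl
  have hMx : ∀ m ∈ M, m ≠ x := by
    intro m hm
    rw [hMdef] at hm
    obtain ⟨⟨m', hm'⟩, -, rfl⟩ := List.mem_map.1 hm
    simpa using hm'
  have hzM : z ∈ M := by
    rw [hMdef]
    exact List.mem_map.2 ⟨⟨z, hz'⟩, q.end_mem_support, rfl⟩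
  -- first vertex of M that lies in L
  obtain ⟨B, y, C, hMsplit, hyL, hBout⟩ :=
    aux_first_in_set {v | v ∈ L} M ⟨z, hzM, hzL⟩
  have hyL' : y ∈ L := hyL
  have hBne : B ≠ [] := by
    intro hB
    rw [hB, List.nil_append] at hMsplit
    rw [hMsplit] at hMhead
    have : y = u := by injection hMhead
    exact huL (this ▸ hyL')
  have hBsubM : B <+ M := by
    rw [hMsplit]; exact (List.sublist_append_left B (y :: C))
  have hBnd : B.Nodup := hMnd.sublist hBsubM
  have hBL : ∀ b ∈ B, b ∉ L := hBout
  have hyx : y ≠ x := hMx y (by rw [hMsplit]; simp)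
  have hxy : x ≠ y := fun e => hyx e.symm
  -- the ear chain x :: B ++ [y]
  have hchain : List.Chain' G.Adj (x :: (B ++ [y])) := by
    apply List.isChain_cons.2
    constructor
    · intro c hc
      have hBhead : (B ++ [y]).head? = some u := by
        obtain ⟨b, B', rfl⟩ := List.exists_cons_of_ne_nil hBne
        have : b = u := by
          rw [hMsplit] at hMhead
          injection hMhead
        simp [this]
      rw [hBhead] at hc
      obtain rfl := Option.mem_some_iff.mp hc
      exact hxu
    · refine hMchain.prefix ?_
      refine ⟨C, ?_⟩
      rw [hMsplit]; simp
  have hlen : ∀ {P' Q' R' : List V} {x' : V} {B' : List V},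
      (P' ++ x' :: (B' ++ (Q' ++ R'))).length
        = (P' ++ x' :: (Q' ++ R')).length + B'.length := by
    intro P' Q' R' x' B'
    simp [List.length_append]
    omega
  have hBpos : 0 < B.length := List.length_pos_iff.2 hBne
  -- split into the two possible orders of x and y in L
  rcases aux_mem_mem_split L hxL hyL' hxy with ⟨P, Q, R, hL⟩ | ⟨P, Q, R, hL⟩
  · refine ⟨P ++ x :: (B ++ (Q ++ y :: R)), ?_, ?_⟩
    · exact aux_good_insert (hL ▸ ⟨hnd, hhead, hlast, hinv⟩) hBne hBnd
        (by intro b hb; rw [← hL]; exact hBL b hb) hchain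
    · rw [hL]
      simp [List.length_append]
      omega
  · -- reverse the ear
    have hchain' : List.Chain' G.Adj (y :: (B.reverse ++ [x])) := by
      have h1 : (x :: (B ++ [y])).reverse = y :: (B.reverse ++ [x]) := by
        simp
      have h2 : List.Chain' G.Adj (x :: (B ++ [y])).reverse :=
        List.isChain_reverse.2 (hchain.imp fun a b h => h.symm)
      rwa [h1] at h2
    refine ⟨P ++ y :: (B.reverse ++ (Q ++ x :: R)), ?_, ?_⟩
    · exact aux_good_insert (hL ▸ ⟨hnd, hhead, hlast, hinv⟩)
        (by simpa using hBne) (by simpa using hBnd)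
        (by intro b hb; rw [← hL]; exact hBL b (List.mem_reverse.1 hb)) hchain'
    · rw [hL]
      simp [List.length_append]
      omega

end Aux

/-- Every biconnected finite simple graph with an edge `st` admits an st-ordering:
an ordering of the vertices starting at `s` and ending at `t` in which every
other vertex has both a neighbor with smaller index and a neighbor with larger
index. -/
theorem exists_st_ordering {V : Type*} [Fintype V] [DecidableEq V]
    (G : SimpleGraph V) (hconn : G.Connected)
    (h2 : ∀ v : V, (G.induce ({v}ᶜ : Set V)).Connected)
    (s t : V) (hst : G.Adj s t) :
    ∃ σ : V ≃ Fin (Fintype.card V),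
      (∀ v : V, σ s ≤ σ v) ∧ (∀ v : V, σ v ≤ σ t) ∧
      ∀ v : V, v ≠ s → v ≠ t →
        (∃ u : V, G.Adj v u ∧ σ u < σ v) ∧ (∃ u : V, G.Adj v u ∧ σ v < σ u) := by
  classical
  -- build a complete good list
  have hstep : ∀ n (L : List V), GoodList G s t L →
      Fintype.card V - L.length ≤ n →
      ∃ L', GoodList G s t L' ∧ ∀ v, v ∈ L' := by
    intro n
    induction n with
    | zero =>
      intro L hg hle
      refine ⟨L, hg, ?_⟩
      have hcard : L.length = Fintype.card V :=
        le_antisymm hg.1.length_le_card (by omega)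
      have : L.toFinset = Finset.univ := by
        apply Finset.eq_univ_of_card
        rw [List.toFinset_card_of_nodup hg.1, hcard]
      intro v
      have : v ∈ L.toFinset := this ▸ Finset.mem_univ v
      exact List.mem_toFinset.1 this
    | succ n ih =>
      intro L hg hle
      by_cases hall : ∀ v, v ∈ L
      · exact ⟨L, hg, hall⟩
      · push_neg at hall
        obtain ⟨w₀, hw₀⟩ := hall
        obtain ⟨L', hg', hlen⟩ := aux_good_grow hconn h2 hst hg hw₀
        refine ih L' hg' ?_
        have hLlt : L.length < Fintype.card V := by
          have h1 : L.length ≤ Fintype.card V := hg.1.length_le_card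
          rcases h1.lt_or_eq with h | h
          · exact h
          · exfalso
            have : L.toFinset = Finset.univ := by
              apply Finset.eq_univ_of_card
              rw [List.toFinset_card_of_nodup hg.1, h]
            exact hw₀ (List.mem_toFinset.1 (this ▸ Finset.mem_univ w₀))
        omega
  have hinit : GoodList G s t [s, t] := by
    refine ⟨by simp [hst.ne], rfl, rfl, ?_⟩
    intro v hv hvs hvt
    rcases List.mem_cons.1 hv with rfl | hv
    · exact absurd rfl hvs
    · rcases List.mem_cons.1 hv with rfl | hv
      · exact absurd rfl hvt
      · cases hv
  obtain ⟨L, hg, hall⟩ := hstep (Fintype.card V) [s, t] hinit (by omega)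
  obtain ⟨hnd, hhead, hlast, hinv⟩ := hg
  have hcard : L.length = Fintype.card V :=
    le_antisymm hnd.length_le_card (by
      have : Finset.univ.card ≤ L.toFinset.card :=
        Finset.card_le_card (fun v _ => List.mem_toFinset.2 (hall v))
      rwa [List.toFinset_card_of_nodup hnd, Finset.card_univ] at this)
  set σ₀ : Fin L.length ≃ V := hnd.getEquivOfForallMemList L hall with hσ₀
  set σ : V ≃ Fin (Fintype.card V) := σ₀.symm.trans (finCongr hcard) with hσ
  have hσval : ∀ v : V, (σ v : ℕ) = L.idxOf v := by
    intro v
    simp [hσ, hσ₀, List.Nodup.getEquivOfForallMemList]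
  have hlt : ∀ {a b : V}, [a, b] <+ L → σ a < σ b := by
    intro a b h
    rw [Fin.lt_def, hσval, hσval]
    exact aux_sublist_indexOf hnd h
  -- s is first
  obtain ⟨L₀, hL₀⟩ : ∃ L₀, L = s :: L₀ := by
    cases L with
    | nil => simp at hhead
    | cons a L₀ =>
      refine ⟨L₀, ?_⟩
      have : a = s := by injection hhead
      rw [this]
  -- t is last
  have hLne : L ≠ [] := by rw [hL₀]; simp
  have htlast : L.getLast hLne = t := by
    have := List.getLast?_eq_getLast hLne
    rw [hlast] at this
    exact (Option.some_injective _ this).symm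
  have hdrop : L.dropLast ++ [t] = L := by
    conv_rhs => rw [← List.dropLast_append_getLast hLne, htlast]
  refine ⟨σ, ?_, ?_, ?_⟩
  · intro v
    by_cases hv : v = s
    · rw [hv]
    · have : [s, v] <+ L := by
        rw [hL₀]
        exact (List.singleton_sublist.2 (by
          have := hall v
          rw [hL₀] at this
          rcases List.mem_cons.1 this with h | h
          · exact absurd h hv
          · exact h)).cons₂ s
      exact (hlt this).le
  · intro v
    by_cases hv : v = t
    · rw [hv]
    · have hvmem : v ∈ L.dropLast := by
        have := hall v
        rw [← hdrop] at this
        rcases List.mem_append.1 this with h | h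
        · exact h
        · simp only [List.mem_singleton] at h; exact absurd h hv
      have : [v, t] <+ L := by
        rw [← hdrop]
        exact List.Sublist.append (List.singleton_sublist.2 hvmem) (List.Sublist.refl _)
      exact (hlt this).le
  · intro v hvs hvt
    obtain ⟨⟨u₁, ha₁, hs₁⟩, ⟨u₂, ha₂, hs₂⟩⟩ := hinv v (hall v) hvs hvt
    exact ⟨⟨u₁, ha₁, hlt hs₁⟩, ⟨u₂, ha₂, hlt hs₂⟩⟩
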